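/- Almost surely, E[e² | x] − s² = θ̃'(I_d − P_{M̃}){ E[z̃ z̃' | x] − ((I_d − P_{M̃}) + P_{M̃} z̃ z̃' P_{M̃}) }(I_d − P_{M̃})θ̃, where E[z̃ z̃' | x] denotes the entrywise conditional expectation of the matrix z̃ z̃' given the σ-algebra generated by x. -/

import Mathlib

open MeasureTheory Matrix ProbabilityTheory

/-!
Whitening: with `T = Σ^{1/2} R` we have `z = μ + T z̃` and `x = M'μ + M̃'z̃`, so the residual is
`e = c + w'z̃ + ε` with `w = θ̃ − M̃β` and a constant `c`. The normal equations `E[e] = 0` and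
`E[e x] = 0` of the least-squares problem, together with `E[z̃] = 0`, `E[z̃z̃'] = I` and `ε ⟂ z`,
force `c = 0` and `M̃'w = 0`; so `P w = 0` and, as `θ̃ = w + M̃β`, `(I − P)θ̃ = w`. Hence the
right-hand side is `w' E[z̃z̃' | x] w − w'w`. On the other side, `ε` is centred and independent of
`σ(z) ⊇ σ(x)`, so `E[e² | x] = w' E[z̃z̃' | x] w + E[ε²]` and `s² = w'w + E[ε²]`.
-/

namespace Matrix

variable {m n : Type*} [Fintype m] [Fintype n] [DecidableEq n]

theorem isUnit_of_rank_eq_card {K : Type*} [Field K] {A : Matrix n n K}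
    (h : A.rank = Fintype.card n) : IsUnit A := by
  rw [← mulVec_surjective_iff_isUnit]
  exact LinearMap.range_eq_top.1
    (Submodule.eq_top_of_finrank_eq (h.trans (Module.finrank_pi K).symm))

theorem isUnit_transpose_mul_self_of_rank_eq {K : Type*} [Field K] [LinearOrder K]
    [IsStrictOrderedRing K] {A : Matrix m n K} (h : A.rank = Fintype.card n) :
    IsUnit (Aᵀ * A) :=
  isUnit_of_rank_eq_card (by rw [rank_transpose_mul_self, h])

theorem dotProduct_compl_proj_mulVec [DecidableEq m] {R : Type*} [CommRing R] {A : Matrix m n R}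
    (hA : IsUnit (Aᵀ * A)) {w θ : m → R} {b : n → R} (hw : Aᵀ *ᵥ w = 0) (hθ : θ = w + A *ᵥ b)
    (C B : Matrix m m R) :
    θ ⬝ᵥ (((1 - A * (Aᵀ * A)⁻¹ * Aᵀ) *
        (C - ((1 - A * (Aᵀ * A)⁻¹ * Aᵀ) + A * (Aᵀ * A)⁻¹ * Aᵀ * B * (A * (Aᵀ * A)⁻¹ * Aᵀ))) *
        (1 - A * (Aᵀ * A)⁻¹ * Aᵀ)) *ᵥ θ) = w ⬝ᵥ (C *ᵥ w) - w ⬝ᵥ w := by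
  set P := A * (Aᵀ * A)⁻¹ * Aᵀ with hP
  have hPsymm : (1 - P)ᵀ = 1 - P := by
    simp [hP, transpose_mul, transpose_nonsing_inv, Matrix.mul_assoc]
  have hPw : P *ᵥ w = 0 := by
    rw [hP, ← mulVec_mulVec, hw, mulVec_zero]
  have hPA : P * A = A := by
    rw [hP, Matrix.mul_assoc _ Aᵀ A, Matrix.mul_assoc A,
      nonsing_inv_mul _ ((isUnit_iff_isUnit_det _).mp hA), Matrix.mul_one]
  have hθw : (1 - P) *ᵥ θ = w := by
    rw [hθ, sub_mulVec, one_mulVec, mulVec_add, hPw, mulVec_mulVec, hPA]; abel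
  have hθdot : ∀ v, θ ⬝ᵥ ((1 - P) *ᵥ v) = w ⬝ᵥ v := fun v => by
    rw [dotProduct_mulVec, ← hPsymm, vecMul_transpose, hθw]
  have hPBPw : (P * B * P) *ᵥ w = 0 := by rw [← mulVec_mulVec, hPw, mulVec_zero]
  rw [← mulVec_mulVec, ← mulVec_mulVec, hθw, hθdot, sub_mulVec, add_mulVec, sub_mulVec,
    one_mulVec, hPw, hPBPw, sub_zero, add_zero, dotProduct_sub]

theorem dotProduct_mul_dotProduct_eq_sum_sum {ι R : Type*} [Fintype ι] [CommSemiring R]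
    (u v a : ι → R) : (u ⬝ᵥ a) * (v ⬝ᵥ a) = ∑ i, ∑ j, u i * v j * (a i * a j) := by
  simp only [dotProduct, Finset.sum_mul_sum]
  exact Finset.sum_congr rfl fun i _ => Finset.sum_congr rfl fun j _ => by ring

theorem dotProduct_mulVec_eq_sum_sum {ι R : Type*} [Fintype ι] [CommSemiring R]
    (u v : ι → R) (B : Matrix ι ι R) : u ⬝ᵥ (B *ᵥ v) = ∑ i, ∑ j, u i * v j * B i j := by
  simp only [dotProduct, mulVec, Finset.mul_sum]
  exact Finset.sum_congr rfl fun i _ => Finset.sum_congr rfl fun j _ => by ring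

end Matrix

section RandomVector

variable {Ω ι : Type*} {mΩ : MeasurableSpace Ω} {μ : Measure Ω} [Fintype ι] {Z : Ω → ι → ℝ}
  {ε : Ω → ℝ}

theorem memLp_dotProduct {p : ENNReal} (hZ : ∀ i, MemLp (fun ω => Z ω i) p μ) (v : ι → ℝ) :
    MemLp (fun ω => v ⬝ᵥ Z ω) p μ :=
  memLp_finsetSum _ fun i _ => (hZ i).const_mul (v i)

theorem integrable_dotProduct (hZ : ∀ i, Integrable (fun ω => Z ω i) μ) (v : ι → ℝ) :
    Integrable (fun ω => v ⬝ᵥ Z ω) μ :=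
  integrable_finsetSum _ fun i _ => (hZ i).const_mul (v i)

theorem integral_dotProduct_eq_zero (hZ : ∀ i, Integrable (fun ω => Z ω i) μ)
    (hZ0 : ∀ i, ∫ ω, Z ω i ∂μ = 0) (v : ι → ℝ) : ∫ ω, v ⬝ᵥ Z ω ∂μ = 0 := by
  simp only [dotProduct]
  rw [integral_finsetSum _ fun i _ => (hZ i).const_mul _]
  simp [integral_const_mul, hZ0]

theorem integral_dotProduct_add_eq_zero (hZ : ∀ i, Integrable (fun ω => Z ω i) μ)
    (hZ0 : ∀ i, ∫ ω, Z ω i ∂μ = 0) (hε : Integrable ε μ) (hε0 : ∫ ω, ε ω ∂μ = 0) (w : ι → ℝ) :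
    ∫ ω, w ⬝ᵥ Z ω + ε ω ∂μ = 0 := by
  rw [integral_add (integrable_dotProduct hZ w) hε, integral_dotProduct_eq_zero hZ hZ0, hε0,
    add_zero]

theorem integral_const_add_dotProduct_add [IsProbabilityMeasure μ]
    (hZ : ∀ i, Integrable (fun ω => Z ω i) μ) (hZ0 : ∀ i, ∫ ω, Z ω i ∂μ = 0)
    (hε : Integrable ε μ) (hε0 : ∫ ω, ε ω ∂μ = 0) (c : ℝ) (w : ι → ℝ) :
    ∫ ω, c + (w ⬝ᵥ Z ω + ε ω) ∂μ = c := by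
  have he : Integrable (fun ω => w ⬝ᵥ Z ω + ε ω) μ := (integrable_dotProduct hZ w).add hε
  rw [integral_add (integrable_const c) he, integral_dotProduct_add_eq_zero hZ hZ0 hε hε0,
    integral_const, probReal_univ, one_smul, add_zero]

theorem integral_dotProduct_mul_dotProduct
    (hZ : ∀ i j, Integrable (fun ω => Z ω i * Z ω j) μ) (u v : ι → ℝ) :
    ∫ ω, (u ⬝ᵥ Z ω) * (v ⬝ᵥ Z ω) ∂μ = u ⬝ᵥ (of (fun i j => ∫ ω, Z ω i * Z ω j ∂μ) *ᵥ v) := by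
  simp_rw [dotProduct_mul_dotProduct_eq_sum_sum, dotProduct_mulVec_eq_sum_sum, of_apply]
  rw [integral_finsetSum _ fun i _ => integrable_finsetSum _ fun j _ => (hZ i j).const_mul _]
  refine Finset.sum_congr rfl fun i _ => ?_
  rw [integral_finsetSum _ fun j _ => (hZ i j).const_mul _]
  simp only [integral_const_mul]

theorem condExp_dotProduct_mul_dotProduct (m : MeasurableSpace Ω)
    (hZ : ∀ i j, Integrable (fun ω => Z ω i * Z ω j) μ) (u v : ι → ℝ) :
    μ[fun ω => (u ⬝ᵥ Z ω) * (v ⬝ᵥ Z ω) | m] =ᵐ[μ]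
      fun ω => u ⬝ᵥ (of (fun i j => μ[fun ω' => Z ω' i * Z ω' j | m] ω) *ᵥ v) := by
  have hsum : (fun ω => (u ⬝ᵥ Z ω) * (v ⬝ᵥ Z ω))
      = ∑ ij : ι × ι, (u ij.1 * v ij.2) • fun ω => Z ω ij.1 * Z ω ij.2 := by
    funext ω
    simp only [Finset.sum_apply, Pi.smul_apply, smul_eq_mul]
    rw [dotProduct_mul_dotProduct_eq_sum_sum,
      Fintype.sum_prod_type' fun i j => u i * v j * (Z ω i * Z ω j)]
  have hterm : ∀ᵐ ω ∂μ, ∀ ij : ι × ι,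
      μ[(u ij.1 * v ij.2) • fun ω' => Z ω' ij.1 * Z ω' ij.2 | m] ω
        = u ij.1 * v ij.2 * μ[fun ω' => Z ω' ij.1 * Z ω' ij.2 | m] ω :=
    ae_all_iff.2 fun ij => condExp_smul _ _ m
  rw [hsum]
  filter_upwards [condExp_finsetSum
    (fun (ij : ι × ι) _ => (hZ ij.1 ij.2).smul (u ij.1 * v ij.2)) m, hterm] with ω hω hω'
  rw [hω, Finset.sum_apply, dotProduct_mulVec_eq_sum_sum, ← Fintype.sum_prod_type']
  exact Finset.sum_congr rfl fun ij _ => hω' ij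

end RandomVector

section LeastSquares

variable {Ω : Type*} {mΩ : MeasurableSpace Ω} {μ : Measure Ω}

theorem integral_mul_eq_zero_of_forall_integral_sq_le {e g : Ω → ℝ} (he : MemLp e 2 μ)
    (hg : MemLp g 2 μ) (h : ∀ t : ℝ, ∫ ω, e ω ^ 2 ∂μ ≤ ∫ ω, (e ω - t * g ω) ^ 2 ∂μ) :
    ∫ ω, e ω * g ω ∂μ = 0 := by
  have hquad : ∀ t : ℝ, 0 ≤ (∫ ω, g ω ^ 2 ∂μ) * (t * t) + (-2 * ∫ ω, e ω * g ω ∂μ) * t + 0 := by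
    intro t
    have hexp : ∫ ω, (e ω - t * g ω) ^ 2 ∂μ
        = ∫ ω, e ω ^ 2 ∂μ - 2 * t * ∫ ω, e ω * g ω ∂μ + t ^ 2 * ∫ ω, g ω ^ 2 ∂μ := by
      have heg : Integrable (fun ω => e ω * g ω) μ := he.integrable_mul hg
      have hsplit : (fun ω => (e ω - t * g ω) ^ 2)
          = fun ω => e ω ^ 2 - 2 * t * (e ω * g ω) + t ^ 2 * g ω ^ 2 := by
        funext ω; ring
      have hcross : Integrable (fun ω => e ω ^ 2 - 2 * t * (e ω * g ω)) μ :=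
        he.integrable_sq.sub (heg.const_mul _)
      rw [hsplit, integral_add hcross (hg.integrable_sq.const_mul _),
        integral_sub he.integrable_sq (heg.const_mul _), integral_const_mul, integral_const_mul]
    linarith [h t, hexp]
  have := discrim_le_zero hquad
  rw [discrim] at this
  nlinarith [sq_nonneg (∫ ω, e ω * g ω ∂μ)]

variable {ι : Type*} [Fintype ι] {y : Ω → ℝ} {x : Ω → ι → ℝ} {α : ℝ} {β : ι → ℝ}

theorem integral_sub_sub_dotProduct_eq_zero [IsFiniteMeasure μ]
    (he : MemLp (fun ω => y ω - α - β ⬝ᵥ x ω) 2 μ)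
    (hmin : ∀ a b, ∫ ω, (y ω - α - β ⬝ᵥ x ω) ^ 2 ∂μ ≤ ∫ ω, (y ω - a - b ⬝ᵥ x ω) ^ 2 ∂μ) :
    ∫ ω, (y ω - α - β ⬝ᵥ x ω) ∂μ = 0 := by
  have h := integral_mul_eq_zero_of_forall_integral_sq_le he (memLp_const 1) fun t => by
    convert hmin (α + t) β using 4; ring
  simpa only [mul_one] using h

theorem integral_sub_sub_dotProduct_mul_eq_zero (he : MemLp (fun ω => y ω - α - β ⬝ᵥ x ω) 2 μ)
    (hx : ∀ j, MemLp (fun ω => x ω j) 2 μ)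
    (hmin : ∀ a b, ∫ ω, (y ω - α - β ⬝ᵥ x ω) ^ 2 ∂μ ≤ ∫ ω, (y ω - a - b ⬝ᵥ x ω) ^ 2 ∂μ)
    (b : ι → ℝ) : ∫ ω, (y ω - α - β ⬝ᵥ x ω) * (b ⬝ᵥ x ω) ∂μ = 0 :=
  integral_mul_eq_zero_of_forall_integral_sq_le he (memLp_dotProduct hx b) fun t => by
    convert hmin α (β + t • b) using 4
    rw [add_dotProduct, smul_dotProduct, smul_eq_mul]; ring

end LeastSquares

section Independence

-- `mΩ` comes last, so it is the instance that unannotated statements such as `Measurable ε` use.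
variable {Ω : Type*} {m mZ mΩ : MeasurableSpace Ω} {μ : Measure Ω} [IsProbabilityMeasure μ]
  {U ε : Ω → ℝ}

theorem condExp_mul_eq_zero_of_indep (hm : m ≤ mZ) (hmZ : mZ ≤ mΩ)
    (hU : StronglyMeasurable[mZ] U) (hU2 : MemLp U 2 μ) (hε : Measurable ε) (hε2 : MemLp ε 2 μ)
    (hind : Indep mZ (MeasurableSpace.comap ε inferInstance) μ) (hε0 : ∫ ω, ε ω ∂μ = 0) :
    μ[U * ε | m] =ᵐ[μ] 0 := by
  have hεZ : μ[ε | mZ] =ᵐ[μ] 0 := by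
    filter_upwards [condExp_indep_eq hε.comap_le hmZ (comap_measurable ε).stronglyMeasurable
      hind.symm] with ω hω
    rw [hω, hε0, Pi.zero_apply]
  have hUεZ : μ[U * ε | mZ] =ᵐ[μ] 0 := by
    filter_upwards [condExp_mul_of_stronglyMeasurable_left hU (hU2.integrable_mul hε2)
      (hε2.integrable one_le_two), hεZ] with ω hω hω'
    simp only [hω, Pi.mul_apply, hω', Pi.zero_apply, mul_zero]
  refine (condExp_condExp_of_le hm hmZ).symm.trans ?_
  simpa only [condExp_zero] using condExp_congr_ae (m := m) hUεZ

theorem integral_mul_eq_zero_of_indep (hmZ : mZ ≤ mΩ)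
    (hU : StronglyMeasurable[mZ] U) (hU2 : MemLp U 2 μ) (hε : Measurable ε) (hε2 : MemLp ε 2 μ)
    (hind : Indep mZ (MeasurableSpace.comap ε inferInstance) μ) (hε0 : ∫ ω, ε ω ∂μ = 0) :
    ∫ ω, U ω * ε ω ∂μ = 0 := by
  change ∫ ω, (U * ε) ω ∂μ = 0
  rw [← integral_condExp hmZ]
  simpa using integral_congr_ae (condExp_mul_eq_zero_of_indep le_rfl hmZ hU hU2 hε hε2 hind hε0)

theorem condExp_add_sq_of_indep (hm : m ≤ mZ) (hmZ : mZ ≤ mΩ)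
    (hU : StronglyMeasurable[mZ] U) (hU2 : MemLp U 2 μ) (hε : Measurable ε) (hε2 : MemLp ε 2 μ)
    (hind : Indep mZ (MeasurableSpace.comap ε inferInstance) μ) (hε0 : ∫ ω, ε ω ∂μ = 0) :
    μ[fun ω => (U ω + ε ω) ^ 2 | m] =ᵐ[μ]
      fun ω => μ[fun ω' => U ω' ^ 2 | m] ω + ∫ ω, ε ω ^ 2 ∂μ := by
  have hsplit : (fun ω => (U ω + ε ω) ^ 2)
      = (fun ω => U ω ^ 2) + ((2 : ℝ) • (U * ε) + fun ω => ε ω ^ 2) := by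
    funext ω; simp only [Pi.add_apply, Pi.smul_apply, Pi.mul_apply, smul_eq_mul]; ring
  have hUε : Integrable (U * ε) μ := hU2.integrable_mul hε2
  have hε2m : μ[fun ω => ε ω ^ 2 | m] =ᵐ[μ] fun _ => ∫ ω, ε ω ^ 2 ∂μ :=
    condExp_indep_eq hε.comap_le (hm.trans hmZ)
      ((comap_measurable ε).pow_const 2).stronglyMeasurable
      (indep_of_indep_of_le_right hind.symm hm)
  rw [hsplit]
  filter_upwards [condExp_add hU2.integrable_sq ((hUε.smul (2 : ℝ)).add hε2.integrable_sq) m,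
    condExp_add (hUε.smul (2 : ℝ)) hε2.integrable_sq m, condExp_smul (2 : ℝ) (U * ε) m,
    condExp_mul_eq_zero_of_indep hm hmZ hU hU2 hε hε2 hind hε0, hε2m] with ω h₁ h₂ h₃ h₄ h₅
  simp only [h₁, Pi.add_apply, h₂, h₃, Pi.smul_apply, h₄, h₅, Pi.zero_apply, smul_zero, zero_add]

theorem integral_add_sq_of_indep (hmZ : mZ ≤ mΩ)
    (hU : StronglyMeasurable[mZ] U) (hU2 : MemLp U 2 μ) (hε : Measurable ε) (hε2 : MemLp ε 2 μ)
    (hind : Indep mZ (MeasurableSpace.comap ε inferInstance) μ) (hε0 : ∫ ω, ε ω ∂μ = 0) :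
    ∫ ω, (U ω + ε ω) ^ 2 ∂μ = ∫ ω, U ω ^ 2 ∂μ + ∫ ω, ε ω ^ 2 ∂μ := by
  rw [← integral_condExp hmZ, integral_congr_ae
    (condExp_add_sq_of_indep le_rfl hmZ hU hU2 hε hε2 hind hε0),
    integral_add integrable_condExp (integrable_const _), integral_condExp hmZ, integral_const,
    probReal_univ, one_smul]

end Independence

structure IsIsotropic {Ω ι : Type*} {mΩ : MeasurableSpace Ω} [Fintype ι] [DecidableEq ι]
    (Z : Ω → ι → ℝ) (μ : Measure Ω) : Prop where
  memLp : ∀ i, MemLp (fun ω => Z ω i) 2 μ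
  integral_mul : ∀ i j, ∫ ω, Z ω i * Z ω j ∂μ = (1 : Matrix ι ι ℝ) i j

namespace IsIsotropic

variable {Ω ι : Type*} {mΩ : MeasurableSpace Ω} {μ : Measure Ω} [Fintype ι] [DecidableEq ι]
  {Z : Ω → ι → ℝ} {ε : Ω → ℝ}

theorem integral_dotProduct_mul_dotProduct (hZ : IsIsotropic Z μ) (u v : ι → ℝ) :
    ∫ ω, (u ⬝ᵥ Z ω) * (v ⬝ᵥ Z ω) ∂μ = u ⬝ᵥ v := by
  rw [_root_.integral_dotProduct_mul_dotProduct
      (fun i j => (hZ.memLp i).integrable_mul (hZ.memLp j)),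
    show of (fun i j => ∫ ω, Z ω i * Z ω j ∂μ) = 1 from ext hZ.integral_mul, one_mulVec]

theorem integral_dotProduct_add_mul_dotProduct (hZ : IsIsotropic Z μ) (hε2 : MemLp ε 2 μ)
    (hZε : ∀ v, ∫ ω, (v ⬝ᵥ Z ω) * ε ω ∂μ = 0) (w v : ι → ℝ) :
    ∫ ω, (w ⬝ᵥ Z ω + ε ω) * (v ⬝ᵥ Z ω) ∂μ = w ⬝ᵥ v := by
  have hsignal : Integrable (fun ω => (w ⬝ᵥ Z ω) * (v ⬝ᵥ Z ω)) μ :=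
    (memLp_dotProduct hZ.memLp w).integrable_mul (memLp_dotProduct hZ.memLp v)
  have hnoise : Integrable (fun ω => (v ⬝ᵥ Z ω) * ε ω) μ :=
    (memLp_dotProduct hZ.memLp v).integrable_mul hε2
  simp_rw [add_mul, mul_comm (ε _)]
  rw [integral_add hsignal hnoise, hZε, add_zero, hZ.integral_dotProduct_mul_dotProduct]

variable [IsFiniteMeasure μ]

theorem transpose_mulVec_eq_zero {κ : Type*} [Fintype κ] (hZ : IsIsotropic Z μ)
    (hZ0 : ∀ i, ∫ ω, Z ω i ∂μ = 0) (hε2 : MemLp ε 2 μ) (hε0 : ∫ ω, ε ω ∂μ = 0)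
    (hZε : ∀ v, ∫ ω, (v ⬝ᵥ Z ω) * ε ω ∂μ = 0) {A : Matrix ι κ ℝ} {x₀ : κ → ℝ} {w : ι → ℝ}
    (h : ∀ b, ∫ ω, (w ⬝ᵥ Z ω + ε ω) * (b ⬝ᵥ (x₀ + Aᵀ *ᵥ Z ω)) ∂μ = 0) :
    Aᵀ *ᵥ w = 0 := by
  refine dotProduct_eq_zero_iff.1 fun b => ?_
  have hZ1 : ∀ i, Integrable (fun ω => Z ω i) μ := fun i => (hZ.memLp i).integrable one_le_two
  have hmean : Integrable (fun ω => (b ⬝ᵥ x₀) * (w ⬝ᵥ Z ω + ε ω)) μ :=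
    ((integrable_dotProduct hZ1 w).add (hε2.integrable one_le_two)).const_mul _
  have hcov : Integrable (fun ω => (w ⬝ᵥ Z ω + ε ω) * ((A *ᵥ b) ⬝ᵥ Z ω)) μ :=
    ((memLp_dotProduct hZ.memLp w).add hε2).integrable_mul (memLp_dotProduct hZ.memLp (A *ᵥ b))
  have hb := h b
  simp_rw [dotProduct_add, dotProduct_mulVec, vecMul_transpose, mul_add, mul_comm _ (b ⬝ᵥ x₀)]
    at hb
  rw [integral_add hmean hcov, integral_const_mul,
    integral_dotProduct_add_eq_zero hZ1 hZ0 (hε2.integrable one_le_two) hε0, mul_zero, zero_add,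
    hZ.integral_dotProduct_add_mul_dotProduct hε2 hZε] at hb
  rw [mulVec_transpose, ← dotProduct_mulVec, hb]

end IsIsotropic

section WhitenedRegression

variable {Ω ι κ : Type*} {m mZ mΩ : MeasurableSpace Ω} {μ : Measure Ω} [IsProbabilityMeasure μ]
  [Fintype ι] [DecidableEq ι] [Fintype κ] {Z : Ω → ι → ℝ} {ε : Ω → ℝ}

theorem IsIsotropic.eq_zero_and_transpose_mulVec_eq_zero (hZ : IsIsotropic Z μ)
    (hZ0 : ∀ i, ∫ ω, Z ω i ∂μ = 0) (hmZ : mZ ≤ mΩ) (hZm : Measurable[mZ] Z)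
    (hε : Measurable ε) (hε2 : MemLp ε 2 μ)
    (hind : Indep mZ (MeasurableSpace.comap ε inferInstance) μ) (hε0 : ∫ ω, ε ω ∂μ = 0)
    {y : Ω → ℝ} {x : Ω → κ → ℝ} {A : Matrix ι κ ℝ} {x₀ : κ → ℝ}
    (hx : ∀ ω, x ω = x₀ + Aᵀ *ᵥ Z ω) {α c : ℝ} {β : κ → ℝ} {w : ι → ℝ}
    (hres : ∀ ω, y ω - α - β ⬝ᵥ x ω = c + (w ⬝ᵥ Z ω + ε ω))
    (hmin : ∀ a b, ∫ ω, (y ω - α - β ⬝ᵥ x ω) ^ 2 ∂μ ≤ ∫ ω, (y ω - a - b ⬝ᵥ x ω) ^ 2 ∂μ) :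
    c = 0 ∧ Aᵀ *ᵥ w = 0 := by
  have hZε : ∀ v, ∫ ω, (v ⬝ᵥ Z ω) * ε ω ∂μ = 0 := fun v =>
    integral_mul_eq_zero_of_indep hmZ (by apply Measurable.stronglyMeasurable; fun_prop)
      (memLp_dotProduct hZ.memLp v) hε hε2 hind hε0
  have hres2 : MemLp (fun ω => y ω - α - β ⬝ᵥ x ω) 2 μ := by
    simp_rw [hres]; exact (memLp_const c).add ((memLp_dotProduct hZ.memLp w).add hε2)
  have hx2 : ∀ j, MemLp (fun ω => x ω j) 2 μ := fun j => by
    simp_rw [hx, Pi.add_apply]; exact (memLp_const (x₀ j)).add (memLp_dotProduct hZ.memLp (Aᵀ j))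
  have hZ1 : ∀ i, Integrable (fun ω => Z ω i) μ := fun i => (hZ.memLp i).integrable one_le_two
  have hc : c = 0 := by
    have h := integral_sub_sub_dotProduct_eq_zero hres2 hmin
    simp_rw [hres] at h
    rwa [integral_const_add_dotProduct_add hZ1 hZ0 (hε2.integrable one_le_two) hε0] at h
  refine ⟨hc, hZ.transpose_mulVec_eq_zero hZ0 hε2 hε0 hZε (x₀ := x₀) fun b => ?_⟩
  have hb := integral_sub_sub_dotProduct_mul_eq_zero hres2 hx2 hmin b
  simp only [hres, hc, zero_add] at hb
  simpa only [hx] using hb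

theorem IsIsotropic.condExp_sq_sub_integral_sq_ae_eq [DecidableEq κ] (hZ : IsIsotropic Z μ)
    (hm : m ≤ mZ) (hmZ : mZ ≤ mΩ) (hZm : Measurable[mZ] Z) (hε : Measurable ε)
    (hε2 : MemLp ε 2 μ) (hind : Indep mZ (MeasurableSpace.comap ε inferInstance) μ)
    (hε0 : ∫ ω, ε ω ∂μ = 0) {A : Matrix ι κ ℝ} (hA : IsUnit (Aᵀ * A)) {w θ : ι → ℝ}
    {b : κ → ℝ} (hw : Aᵀ *ᵥ w = 0) (hθ : θ = w + A *ᵥ b) :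
    ∀ᵐ ω ∂μ, μ[fun ω' => (w ⬝ᵥ Z ω' + ε ω') ^ 2 | m] ω - ∫ ω', (w ⬝ᵥ Z ω' + ε ω') ^ 2 ∂μ =
      θ ⬝ᵥ (((1 - A * (Aᵀ * A)⁻¹ * Aᵀ) *
        ((of fun i j => μ[fun ω' => Z ω' i * Z ω' j | m] ω) -
          ((1 - A * (Aᵀ * A)⁻¹ * Aᵀ) +
            A * (Aᵀ * A)⁻¹ * Aᵀ * (of fun i j => Z ω i * Z ω j) * (A * (Aᵀ * A)⁻¹ * Aᵀ))) *
        (1 - A * (Aᵀ * A)⁻¹ * Aᵀ)) *ᵥ θ) := by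
  have hU : StronglyMeasurable[mZ] fun ω => w ⬝ᵥ Z ω := by
    apply Measurable.stronglyMeasurable; fun_prop
  have hU2 := memLp_dotProduct hZ.memLp w
  filter_upwards [condExp_add_sq_of_indep hm hmZ hU hU2 hε hε2 hind hε0,
    condExp_dotProduct_mul_dotProduct m (fun i j => (hZ.memLp i).integrable_mul (hZ.memLp j)) w w]
    with ω hsq hquad
  rw [hsq, integral_add_sq_of_indep hmZ hU hU2 hε hε2 hind hε0,
    dotProduct_compl_proj_mulVec hA hw hθ]
  simp_rw [sq]
  rw [hquad, hZ.integral_dotProduct_mul_dotProduct]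
  ring

end WhitenedRegression

theorem stmt_6_general
    {Ω : Type*} [MeasureSpace Ω] [IsProbabilityMeasure (ℙ : Measure Ω)]
    {d p : ℕ}
    (z : Ω → Fin d → ℝ) (hzm : Measurable z)
    (μv : Fin d → ℝ)
    (ε : Ω → ℝ) (hεm : Measurable ε) (hε2 : MemLp ε 2 ℙ)
    (hεmean : ∫ ω, ε ω = 0)
    (hindep : IndepFun z ε)
    (ϑ : ℝ) (θ : Fin d → ℝ)
    (y : Ω → ℝ) (hy : ∀ ω, y ω = ϑ + θ ⬝ᵥ z ω + ε ω)
    (M : Matrix (Fin d) (Fin p) ℝ) (hM : M.rank = p)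
    (x : Ω → Fin p → ℝ) (hx : ∀ ω, x ω = Mᵀ *ᵥ z ω)
    -- the surrogate parameters (α, β): the minimizers of E[(y − a − b'x)²]
    (α : ℝ) (β : Fin p → ℝ)
    (hmin : ∀ (a : ℝ) (b : Fin p → ℝ),
        ∫ ω, (y ω - α - β ⬝ᵥ x ω) ^ 2 ≤ ∫ ω, (y ω - a - b ⬝ᵥ x ω) ^ 2)
    (e : Ω → ℝ) (he : ∀ ω, e ω = y ω - α - β ⬝ᵥ x ω)
    (s2 : ℝ) (hs2 : s2 = ∫ ω, (e ω) ^ 2)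
    -- the representation z = μ + Σ^{1/2} R z̃ with Σ^{1/2} the symmetric positive
    -- definite square root of Σ, R orthogonal, E[z̃] = 0 and E[z̃ z̃'] = I_d
    (S : Matrix (Fin d) (Fin d) ℝ) (hSpd : S.PosDef)
    (R : Matrix (Fin d) (Fin d) ℝ) (hR : Rᵀ * R = 1)
    (zt : Ω → Fin d → ℝ)
    (hzt2 : ∀ i, MemLp (fun ω => zt ω i) 2 ℙ)
    (hztmean : ∀ i, ∫ ω, zt ω i = 0)
    (hztcov : ∀ i j, ∫ ω, zt ω i * zt ω j = (1 : Matrix (Fin d) (Fin d) ℝ) i j)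
    (hzrep : ∀ ω, z ω = μv + S *ᵥ (R *ᵥ zt ω))
    -- θ̃ = R'Σ^{1/2}θ, M̃ = R'Σ^{1/2}M and the projection P = M̃(M̃'M̃)⁻¹M̃'
    (θt : Fin d → ℝ) (hθt : θt = Rᵀ *ᵥ (S *ᵥ θ))
    (Mt : Matrix (Fin d) (Fin p) ℝ) (hMt : Mt = Rᵀ * S * M)
    (P : Matrix (Fin d) (Fin d) ℝ) (hP : P = Mt * (Mtᵀ * Mt)⁻¹ * Mtᵀ)
    -- the σ-algebra generated by x
    (mx : MeasurableSpace Ω) (hmx : mx = MeasurableSpace.comap x inferInstance) :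
    ∀ᵐ ω ∂ℙ, (ℙ[fun ω' => (e ω') ^ 2|mx]) ω - s2 =
      θt ⬝ᵥ (((1 - P) *
          ((Matrix.of fun i j => (ℙ[fun ω' => zt ω' i * zt ω' j|mx]) ω) -
            ((1 - P) + P * (Matrix.of fun i j => zt ω i * zt ω j) * P)) *
          (1 - P)) *ᵥ θt) := by
  have hSsymm : Sᵀ = S := (isHermitian_iff_isSymm.mp hSpd.isHermitian).eq
  have hT : IsUnit (S * R).det :=
    (isUnit_iff_isUnit_det _).mp (hSpd.isUnit.mul (IsUnit.of_mul_eq_one_right Rᵀ hR))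
  have hzT : ∀ ω, z ω = μv + (S * R) *ᵥ zt ω := fun ω => by rw [hzrep, mulVec_mulVec]
  have hMtT : Mt = (S * R)ᵀ * M := by rw [hMt, transpose_mul, hSsymm]
  have hθtT : θt = (S * R)ᵀ *ᵥ θ := by rw [hθt, transpose_mul, hSsymm, mulVec_mulVec]
  set w := θt - Mt *ᵥ β with hw_def
  have hxrep : ∀ ω, x ω = Mᵀ *ᵥ μv + Mtᵀ *ᵥ zt ω := fun ω => by
    rw [hx, hzT, mulVec_add, mulVec_mulVec, hMtT, transpose_mul, transpose_transpose]
  have hres : ∀ ω, y ω - α - β ⬝ᵥ x ω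
      = (ϑ + θ ⬝ᵥ μv - α - β ⬝ᵥ (Mᵀ *ᵥ μv)) + (w ⬝ᵥ zt ω + ε ω) := fun ω => by
    rw [hy, hxrep, hzT, dotProduct_add, dotProduct_add, dotProduct_mulVec θ, ← mulVec_transpose,
      ← hθtT, dotProduct_mulVec β Mtᵀ, vecMul_transpose Mt, hw_def, sub_dotProduct]
    ring
  have hz : Measurable[MeasurableSpace.comap z inferInstance] z := comap_measurable z
  have hzt : Measurable[MeasurableSpace.comap z inferInstance] zt := by
    have hzt_eq : zt = fun ω => (S * R)⁻¹ *ᵥ (z ω - μv) := funext fun ω => by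
      rw [hzT, add_sub_cancel_left, mulVec_mulVec, nonsing_inv_mul _ hT, one_mulVec]
    rw [hzt_eq]; fun_prop
  have hmxz : mx ≤ MeasurableSpace.comap z inferInstance := by
    rw [hmx, funext hx]
    exact Measurable.comap_le (by fun_prop)
  have hind := (IndepFun_iff_Indep z ε ℙ).mp hindep
  have hiso : IsIsotropic zt ℙ := ⟨hzt2, hztcov⟩
  obtain ⟨hc, hw⟩ := hiso.eq_zero_and_transpose_mulVec_eq_zero hztmean hzm.comap_le hzt hεm
    hε2 hind hεmean hxrep hres hmin
  have hMt : IsUnit (Mtᵀ * Mt) := isUnit_transpose_mul_self_of_rank_eq <| by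
    rw [hMtT, rank_mul_eq_right_of_isUnit_det _ _ (by rwa [det_transpose]), hM, Fintype.card_fin]
  have he' : e = fun ω => w ⬝ᵥ zt ω + ε ω := funext fun ω => by rw [he, hres, hc, zero_add]
  subst he' hs2 hP
  exact hiso.condExp_sq_sub_integral_sq_ae_eq hmxz hzm.comap_le hzt hεm hε2 hind hεmean hMt hw
    (b := β) (by rw [hw_def, sub_add_cancel])

/-- Almost surely,
`E[e² | x] − s² = θ̃'(I_d − P_{M̃}){E[z̃ z̃' | x] − ((I_d − P_{M̃}) + P_{M̃} z̃ z̃' P_{M̃})}(I_d − P_{M̃})θ̃`,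
where `E[z̃ z̃' | x]` is the entrywise conditional expectation of `z̃ z̃'` given the
σ-algebra generated by `x`. -/
theorem stmt_6
    {Ω : Type*} [MeasureSpace Ω] [IsProbabilityMeasure (ℙ : Measure Ω)]
    {d p : ℕ} (hpd : p < d)
    (z : Ω → Fin d → ℝ) (hzm : Measurable z)
    (hz2 : ∀ i, MemLp (fun ω => z ω i) 2 ℙ)
    (μv : Fin d → ℝ) (hμ : ∀ i, ∫ ω, z ω i = μv i)
    (Sg : Matrix (Fin d) (Fin d) ℝ) (hSgpd : Sg.PosDef)
    (hSg : ∀ i j, ∫ ω, (z ω i - μv i) * (z ω j - μv j) = Sg i j)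
    (ε : Ω → ℝ) (hεm : Measurable ε) (hε2 : MemLp ε 2 ℙ)
    (hεmean : ∫ ω, ε ω = 0)
    (σ2 : ℝ) (hσ2 : 0 < σ2) (hεvar : ∫ ω, (ε ω) ^ 2 = σ2)
    (hindep : IndepFun z ε)
    (ϑ : ℝ) (θ : Fin d → ℝ)
    (y : Ω → ℝ) (hy : ∀ ω, y ω = ϑ + θ ⬝ᵥ z ω + ε ω)
    (M : Matrix (Fin d) (Fin p) ℝ) (hM : M.rank = p)
    (x : Ω → Fin p → ℝ) (hx : ∀ ω, x ω = Mᵀ *ᵥ z ω)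
    -- the surrogate parameters (α, β): the minimizers of E[(y − a − b'x)²]
    (α : ℝ) (β : Fin p → ℝ)
    (hmin : ∀ (a : ℝ) (b : Fin p → ℝ),
        ∫ ω, (y ω - α - β ⬝ᵥ x ω) ^ 2 ≤ ∫ ω, (y ω - a - b ⬝ᵥ x ω) ^ 2)
    (e : Ω → ℝ) (he : ∀ ω, e ω = y ω - α - β ⬝ᵥ x ω)
    (s2 : ℝ) (hs2 : s2 = ∫ ω, (e ω) ^ 2)
    -- the representation z = μ + Σ^{1/2} R z̃ with Σ^{1/2} the symmetric positive
    -- definite square root of Σ, R orthogonal, E[z̃] = 0 and E[z̃ z̃'] = I_d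
    (S : Matrix (Fin d) (Fin d) ℝ) (hSpd : S.PosDef) (hSsq : S * S = Sg)
    (R : Matrix (Fin d) (Fin d) ℝ) (hR : Rᵀ * R = 1)
    (zt : Ω → Fin d → ℝ) (hztm : Measurable zt)
    (hzt2 : ∀ i, MemLp (fun ω => zt ω i) 2 ℙ)
    (hztmean : ∀ i, ∫ ω, zt ω i = 0)
    (hztcov : ∀ i j, ∫ ω, zt ω i * zt ω j = (1 : Matrix (Fin d) (Fin d) ℝ) i j)
    (hzrep : ∀ ω, z ω = μv + S *ᵥ (R *ᵥ zt ω))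
    -- θ̃ = R'Σ^{1/2}θ, M̃ = R'Σ^{1/2}M and the projection P = M̃(M̃'M̃)⁻¹M̃'
    (θt : Fin d → ℝ) (hθt : θt = Rᵀ *ᵥ (S *ᵥ θ))
    (Mt : Matrix (Fin d) (Fin p) ℝ) (hMt : Mt = Rᵀ * S * M)
    (P : Matrix (Fin d) (Fin d) ℝ) (hP : P = Mt * (Mtᵀ * Mt)⁻¹ * Mtᵀ)
    -- the σ-algebra generated by x
    (mx : MeasurableSpace Ω) (hmx : mx = MeasurableSpace.comap x inferInstance)
    -- z̃ has finite fourth moments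
    (hzt4 : ∀ i, MemLp (fun ω => zt ω i) 4 ℙ) :
    ∀ᵐ ω ∂ℙ, (ℙ[fun ω' => (e ω') ^ 2|mx]) ω - s2 =
      θt ⬝ᵥ (((1 - P) *
          ((Matrix.of fun i j => (ℙ[fun ω' => zt ω' i * zt ω' j|mx]) ω) -
            ((1 - P) + P * (Matrix.of fun i j => zt ω i * zt ω j) * P)) *
          (1 - P)) *ᵥ θt) :=
  stmt_6_general z hzm μv ε hεm hε2 hεmean hindep ϑ θ y hy M hM x hx α β hmin e he s2 hs2 S hSpd R
    hR zt hzt2 hztmean hztcov hzrep θt hθt Mt hMt P hP mx hmx
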